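/- arXiv:1602.03647 — 2 statements merged into one kernel-verified Lean document; each statement's English description precedes it below -/
import Mathlib

section
/- Let m ≥ 2, let A and B be disjoint sets of m vertices each in {1,…,p} (p ≥ 2m), and let the building-block graph G_0 be the graph whose edges are: all pairs within A, all pairs within B, and a fixed perfect matching of m edges between A and B, with no other edges. Let G be any graph obtained from G_0 by adding an arbitrary subset of the remaining edges between A and B, and let G' be the graph consisting of the complete clique on the 2m vertices A ∪ B (and no other edges). Then D(P_G‖P_{G'}) ≤ 12 λ m⁴ e^{−λ(m−1)/2}. -/
open Real Finset
open scoped Classical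

noncomputable section

/-- Value of a spin: `true ↦ +1`, `false ↦ -1`. -/
def confVal (b : Bool) : ℝ := if b then 1 else -1

/-- The Ising interaction `∑_{{i,j}∈E} x_i x_j` (each edge counted once). -/
def isingEnergy {p : ℕ} (G : SimpleGraph (Fin p)) (x : Fin p → Bool) : ℝ :=
  (1 / 2) * ∑ i : Fin p, ∑ j : Fin p,
    if G.Adj i j then confVal (x i) * confVal (x j) else 0

/-- The partition function `Z_G`. -/
def isingZ {p : ℕ} (lam : ℝ) (G : SimpleGraph (Fin p)) : ℝ :=
  ∑ x : Fin p → Bool, Real.exp (lam * isingEnergy G x)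

/-- The ferromagnetic Ising distribution `P_G(x)`. -/
def isingP {p : ℕ} (lam : ℝ) (G : SimpleGraph (Fin p)) (x : Fin p → Bool) : ℝ :=
  Real.exp (lam * isingEnergy G x) / isingZ lam G

/-- Kullback–Leibler divergence `D(P_G ‖ P_{G'})`. -/
def isingKL {p : ℕ} (lam : ℝ) (G G' : SimpleGraph (Fin p)) : ℝ :=
  ∑ x : Fin p → Bool, isingP lam G x * Real.log (isingP lam G x / isingP lam G' x)

/-- The correlation `E_G[X_i X_j]`. -/
def isingCorr {p : ℕ} (lam : ℝ) (G : SimpleGraph (Fin p)) (i j : Fin p) : ℝ :=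
  ∑ x : Fin p → Bool, isingP lam G x * (confVal (x i) * confVal (x j))

/-- Probability of an event under `P_G`. -/
def eventProb {p : ℕ} (lam : ℝ) (G : SimpleGraph (Fin p)) (S : Set (Fin p → Bool)) : ℝ :=
  ∑ x : Fin p → Bool, if x ∈ S then isingP lam G x else 0

/-- `P_G[X_i = X_j]`. -/
def isingProbEq {p : ℕ} (lam : ℝ) (G : SimpleGraph (Fin p)) (i j : Fin p) : ℝ :=
  eventProb lam G {x | x i = x j}

/-- The edge set of `G` as a `Finset`. -/
def edgeFin {p : ℕ} (G : SimpleGraph (Fin p)) : Finset (Sym2 (Fin p)) :=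
  (Set.toFinite G.edgeSet).toFinset

/-- The edit distance `|E Δ E'|` between two graphs. -/
def editDist {p : ℕ} (G G' : SimpleGraph (Fin p)) : ℕ :=
  ((edgeFin G \ edgeFin G') ∪ (edgeFin G' \ edgeFin G)).card

lemma confVal_mul_self (s : Bool) : confVal s * confVal s = 1 := by
  cases s <;> simp [confVal]

lemma confVal_mul_eq (s t : Bool) : confVal s * confVal t = if s = t then 1 else -1 := by
  cases s <;> cases t <;> simp [confVal]

lemma one_sub_confVal_mul_nonneg (s t : Bool) : 0 ≤ 1 - confVal s * confVal t := by
  rw [confVal_mul_eq]; split <;> norm_num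

lemma confVal_mul_le_one (s t : Bool) : confVal s * confVal t ≤ 1 := by
  rw [confVal_mul_eq]; split <;> norm_num

/-- sum factorization through `a`, `b`, and the rest -/
lemma sum_factor {p m : ℕ} (a b : Fin m → Fin p)
    (ha : Function.Injective a) (hb : Function.Injective b)
    (hab : ∀ k k', a k ≠ b k')
    (F : (Fin m → Bool) → (Fin m → Bool) → ℝ) :
    ∑ x : Fin p → Bool, F (fun k => x (a k)) (fun k => x (b k)) =
      (2:ℝ) ^ (Fintype.card {i : Fin p // ¬ (∃ k, i = a k) ∧ ¬ (∃ k, i = b k)}) *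
        ∑ α : Fin m → Bool, ∑ β : Fin m → Bool, F α β := by
  classical
  set C := {i : Fin p // ¬ (∃ k, i = a k) ∧ ¬ (∃ k, i = b k)}
  let φ : Fin m ⊕ Fin m ⊕ C → Fin p := Sum.elim a (Sum.elim b Subtype.val)
  have hinj : Function.Injective φ := by
    rintro (k | k | c) (k' | k' | c') h <;> simp only [φ, Sum.elim_inl, Sum.elim_inr] at h
    · exact congrArg Sum.inl (ha h)
    · exact absurd h (hab k k')
    · exact absurd ⟨k, h.symm⟩ c'.2.1
    · exact absurd h.symm (hab k' k)
    · exact congrArg (Sum.inr ∘ Sum.inl) (hb h)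
    · exact absurd ⟨k, h.symm⟩ c'.2.2
    · exact absurd ⟨k', h⟩ c.2.1
    · exact absurd ⟨k', h⟩ c.2.2
    · exact congrArg (Sum.inr ∘ Sum.inr) (Subtype.ext h)
  have hsurj : Function.Surjective φ := by
    intro i
    by_cases h1 : ∃ k, i = a k
    · obtain ⟨k, rfl⟩ := h1; exact ⟨Sum.inl k, rfl⟩
    by_cases h2 : ∃ k, i = b k
    · obtain ⟨k, rfl⟩ := h2; exact ⟨Sum.inr (Sum.inl k), rfl⟩
    · exact ⟨Sum.inr (Sum.inr ⟨i, h1, h2⟩), rfl⟩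
  let e : (Fin m ⊕ Fin m ⊕ C) ≃ Fin p := Equiv.ofBijective φ ⟨hinj, hsurj⟩
  have key : ∀ (y : Fin m ⊕ Fin m ⊕ C → Bool),
      F (fun k => (y ∘ e.symm) (a k)) (fun k => (y ∘ e.symm) (b k)) =
      F (fun k => y (Sum.inl k)) (fun k => y (Sum.inr (Sum.inl k))) := by
    intro y
    have h1 : ∀ k, e.symm (a k) = Sum.inl k := fun k =>
      e.symm_apply_eq.mpr rfl
    have h2 : ∀ k, e.symm (b k) = Sum.inr (Sum.inl k) := fun k =>
      e.symm_apply_eq.mpr rfl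
    simp only [Function.comp]
    congr 1 <;> funext k
    · rw [h1]
    · rw [h2]
  have step1 : ∑ x : Fin p → Bool, F (fun k => x (a k)) (fun k => x (b k)) =
      ∑ y : Fin m ⊕ Fin m ⊕ C → Bool,
        F (fun k => y (Sum.inl k)) (fun k => y (Sum.inr (Sum.inl k))) := by
    rw [← Equiv.sum_comp (Equiv.arrowCongr e (Equiv.refl Bool))
      (fun x => F (fun k => x (a k)) (fun k => x (b k)))]
    refine Finset.sum_congr rfl fun y _ => ?_
    have : (Equiv.arrowCongr e (Equiv.refl Bool)) y = y ∘ e.symm := by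
      funext i; simp [Equiv.arrowCongr]
    rw [this, key y]
  rw [step1]
  -- now factor the sum over functions on a sum type
  let e2 : (Fin m ⊕ Fin m ⊕ C → Bool) ≃ ((Fin m → Bool) × ((Fin m ⊕ C) → Bool)) :=
    Equiv.sumArrowEquivProdArrow _ _ _
  rw [← Equiv.sum_comp e2.symm (fun y =>
    F (fun k => y (Sum.inl k)) (fun k => y (Sum.inr (Sum.inl k))))]
  have : ∀ z : (Fin m → Bool) × ((Fin m ⊕ C) → Bool),
      F (fun k => (e2.symm z) (Sum.inl k)) (fun k => (e2.symm z) (Sum.inr (Sum.inl k))) =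
      F z.1 (fun k => z.2 (Sum.inl k)) := by
    intro z; rfl
  simp only [this]
  rw [Fintype.sum_prod_type]
  rw [Finset.mul_sum]
  refine Finset.sum_congr rfl fun α _ => ?_
  let e3 : (Fin m ⊕ C → Bool) ≃ ((Fin m → Bool) × (C → Bool)) :=
    Equiv.sumArrowEquivProdArrow _ _ _
  rw [← Equiv.sum_comp e3.symm (fun y => F α (fun k => y (Sum.inl k)))]
  have h3 : ∀ z : (Fin m → Bool) × (C → Bool),
      F α (fun k => (e3.symm z) (Sum.inl k)) = F α z.1 := fun z => rfl
  simp only [h3]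
  rw [Fintype.sum_prod_type]
  rw [Finset.mul_sum]
  refine Finset.sum_congr rfl fun β _ => ?_
  show ∑ _y : C → Bool, F α β = _
  rw [Finset.sum_const, nsmul_eq_mul, mul_comm, Finset.card_univ, Fintype.card_fun,
    Fintype.card_bool]
  push_cast
  ring


lemma sum_confVal {m : ℕ} (y : Fin m → Bool) :
    ∑ k, confVal (y k) = (m : ℝ) - 2 * (univ.filter fun k => y k = false).card := by
  have : ∀ k, confVal (y k) = 1 - 2 * (if y k = false then (1:ℝ) else 0) := by
    intro k; cases h : y k <;> simp [confVal] <;> norm_num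
  rw [Finset.sum_congr rfl fun k _ => this k]
  rw [Finset.sum_sub_distrib, Finset.sum_const, ← Finset.mul_sum, Finset.sum_boole]
  simp

lemma clique_pair_sum {m : ℕ} (y : Fin m → Bool) :
    ∑ q : Fin m × Fin m, (1 - confVal (y q.1) * confVal (y q.2)) =
      4 * (univ.filter fun k => y k = false).card *
        ((m:ℝ) - (univ.filter fun k => y k = false).card) := by
  have h2 : ∑ q : Fin m × Fin m, confVal (y q.1) * confVal (y q.2)
      = (∑ k, confVal (y k)) * (∑ k, confVal (y k)) := by
    rw [Finset.sum_mul_sum]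
    exact Fintype.sum_prod_type _
  rw [Finset.sum_sub_distrib, h2, sum_confVal, Finset.sum_const, Finset.card_univ,
    Fintype.card_prod, Fintype.card_fin]
  push_cast
  ring

/-- The energy deficit of a configuration versus all-plus. -/
lemma energy_deficit {p m : ℕ} (G : SimpleGraph (Fin p)) (a b : Fin m → Fin p)
    (ha : Function.Injective a) (hb : Function.Injective b)
    (hab : ∀ k k', a k ≠ b k')
    (hGaa : ∀ k k', k ≠ k' → G.Adj (a k) (a k'))
    (hGbb : ∀ k k', k ≠ k' → G.Adj (b k) (b k'))
    (hGm : ∀ k, G.Adj (a k) (b k)) (x : Fin p → Bool) :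
    2 * (((univ.filter fun k => x (a k) = false).card : ℝ) *
          ((m:ℝ) - (univ.filter fun k => x (a k) = false).card)
        + ((univ.filter fun k => x (b k) = false).card : ℝ) *
          ((m:ℝ) - (univ.filter fun k => x (b k) = false).card)
        + ((univ.filter fun k => x (a k) ≠ x (b k)).card : ℝ))
      ≤ isingEnergy G (fun _ => true) - isingEnergy G x := by
  classical
  set w : Fin p × Fin p → ℝ := fun q =>
    if G.Adj q.1 q.2 then 1 - confVal (x q.1) * confVal (x q.2) else 0 with hw
  have hwnn : ∀ q, 0 ≤ w q := by
    intro q; simp only [hw]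
    split
    · exact one_sub_confVal_mul_nonneg _ _
    · exact le_rfl
  have hdiff : isingEnergy G (fun _ => true) - isingEnergy G x =
      (1/2) * ∑ q ∈ univ ×ˢ univ, w q := by
    simp only [isingEnergy, ← mul_sub, ← Finset.sum_sub_distrib]
    rw [← Finset.sum_product']
    congr 1
    refine Finset.sum_congr rfl fun q _ => ?_
    simp only [hw, confVal]
    split <;> simp
  rw [hdiff]
  set FA : Finset (Fin p × Fin p) :=
    ((univ : Finset (Fin m × Fin m)).filter fun q => q.1 ≠ q.2).image
      (fun q => (a q.1, a q.2)) with hFA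
  set FB : Finset (Fin p × Fin p) :=
    ((univ : Finset (Fin m × Fin m)).filter fun q => q.1 ≠ q.2).image
      (fun q => (b q.1, b q.2)) with hFB
  set FM1 : Finset (Fin p × Fin p) := univ.image (fun k => (a k, b k)) with hFM1
  set FM2 : Finset (Fin p × Fin p) := univ.image (fun k => (b k, a k)) with hFM2
  have hsub : ((FA ∪ FB) ∪ (FM1 ∪ FM2)) ⊆ univ ×ˢ univ := by
    intro q _; simp [Finset.mem_product]
  have hbig : ∑ q ∈ (FA ∪ FB) ∪ (FM1 ∪ FM2), w q ≤ ∑ q ∈ univ ×ˢ univ, w q :=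
    Finset.sum_le_sum_of_subset_of_nonneg hsub (fun q _ _ => hwnn q)
  have hd1 : Disjoint FA FB := by
    simp only [Finset.disjoint_left, hFA, hFB, Finset.mem_image]
    rintro q ⟨r, -, rfl⟩ ⟨r', -, h⟩
    exact hab r.1 r'.1 (congrArg Prod.fst h).symm
  have hd2 : Disjoint FM1 FM2 := by
    simp only [Finset.disjoint_left, hFM1, hFM2, Finset.mem_image]
    rintro q ⟨k, -, rfl⟩ ⟨k', -, h⟩
    exact hab k k' (congrArg Prod.fst h).symm
  have hd3 : Disjoint (FA ∪ FB) (FM1 ∪ FM2) := by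
    simp only [Finset.disjoint_left, hFA, hFB, hFM1, hFM2, Finset.mem_union,
      Finset.mem_image]
    rintro q (⟨r, -, rfl⟩ | ⟨r, -, rfl⟩) (⟨k, -, h⟩ | ⟨k, -, h⟩)
    · exact hab r.2 k (congrArg Prod.snd h).symm
    · exact hab r.1 k (congrArg Prod.fst h).symm
    · exact hab k r.1 (congrArg Prod.fst h)
    · exact hab k r.2 (congrArg Prod.snd h)
  rw [Finset.sum_union hd3, Finset.sum_union hd1, Finset.sum_union hd2] at hbig
  -- compute each piece
  have hA : ∑ q ∈ FA, w q =
      4 * ((univ.filter fun k => x (a k) = false).card : ℝ) *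
        ((m:ℝ) - (univ.filter fun k => x (a k) = false).card) := by
    rw [hFA, Finset.sum_image ?hinj]
    case hinj =>
      rintro q - r - h
      exact Prod.ext (ha (congrArg Prod.fst h)) (ha (congrArg Prod.snd h))
    have : ∀ q ∈ (univ : Finset (Fin m × Fin m)).filter fun q => q.1 ≠ q.2,
        w (a q.1, a q.2) = 1 - confVal (x (a q.1)) * confVal (x (a q.2)) := by
      intro q hq
      simp only [Finset.mem_filter] at hq
      simp only [hw]
      rw [if_pos (hGaa _ _ hq.2)]
    rw [Finset.sum_congr rfl this]
    have split := Finset.sum_filter_add_sum_filter_not univ (fun q : Fin m × Fin m => q.1 ≠ q.2)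
      (fun q => 1 - confVal (x (a q.1)) * confVal (x (a q.2)))
    have hdiag : ∑ q ∈ (univ : Finset (Fin m × Fin m)).filter (fun q => ¬ q.1 ≠ q.2),
        (1 - confVal (x (a q.1)) * confVal (x (a q.2))) = 0 := by
      refine Finset.sum_eq_zero fun q hq => ?_
      simp only [Finset.mem_filter, not_not] at hq
      rw [hq.2, confVal_mul_self]; ring
    have hcps := clique_pair_sum (fun k => x (a k))
    beta_reduce at hcps
    linarith [split, hdiag, hcps]
  have hB : ∑ q ∈ FB, w q =
      4 * ((univ.filter fun k => x (b k) = false).card : ℝ) *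
        ((m:ℝ) - (univ.filter fun k => x (b k) = false).card) := by
    rw [hFB, Finset.sum_image ?hinjb]
    case hinjb =>
      rintro q - r - h
      exact Prod.ext (hb (congrArg Prod.fst h)) (hb (congrArg Prod.snd h))
    have : ∀ q ∈ (univ : Finset (Fin m × Fin m)).filter fun q => q.1 ≠ q.2,
        w (b q.1, b q.2) = 1 - confVal (x (b q.1)) * confVal (x (b q.2)) := by
      intro q hq
      simp only [Finset.mem_filter] at hq
      simp only [hw]
      rw [if_pos (hGbb _ _ hq.2)]
    rw [Finset.sum_congr rfl this]
    have split := Finset.sum_filter_add_sum_filter_not univ (fun q : Fin m × Fin m => q.1 ≠ q.2)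
      (fun q => 1 - confVal (x (b q.1)) * confVal (x (b q.2)))
    have hdiag : ∑ q ∈ (univ : Finset (Fin m × Fin m)).filter (fun q => ¬ q.1 ≠ q.2),
        (1 - confVal (x (b q.1)) * confVal (x (b q.2))) = 0 := by
      refine Finset.sum_eq_zero fun q hq => ?_
      simp only [Finset.mem_filter, not_not] at hq
      rw [hq.2, confVal_mul_self]; ring
    have hcps := clique_pair_sum (fun k => x (b k))
    beta_reduce at hcps
    linarith [split, hdiag, hcps]
  have key1 : ∀ k, 1 - confVal (x (a k)) * confVal (x (b k)) =
      if x (a k) ≠ x (b k) then 2 else 0 := by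
    intro k; rw [confVal_mul_eq]
    by_cases h : x (a k) = x (b k) <;> simp [h] <;> norm_num
  have hM1 : ∑ q ∈ FM1, w q = 2 * ((univ.filter fun k => x (a k) ≠ x (b k)).card : ℝ) := by
    rw [hFM1, Finset.sum_image ?hinjm1]
    case hinjm1 =>
      rintro q - r - h
      exact ha (congrArg Prod.fst h)
    have : ∀ k ∈ (univ : Finset (Fin m)),
        w (a k, b k) = if x (a k) ≠ x (b k) then 2 else 0 := by
      intro k _
      simp only [hw]
      rw [if_pos (hGm k)]
      exact key1 k
    rw [Finset.sum_congr rfl this, ← Finset.sum_filter, Finset.sum_const, nsmul_eq_mul,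
      mul_comm]
  have hM2 : ∑ q ∈ FM2, w q = 2 * ((univ.filter fun k => x (a k) ≠ x (b k)).card : ℝ) := by
    rw [hFM2, Finset.sum_image ?hinjm2]
    case hinjm2 =>
      rintro q - r - h
      exact hb (congrArg Prod.fst h)
    have : ∀ k ∈ (univ : Finset (Fin m)),
        w (b k, a k) = if x (a k) ≠ x (b k) then 2 else 0 := by
      intro k _
      simp only [hw]
      rw [if_pos (hGm k).symm, mul_comm]
      exact key1 k
    rw [Finset.sum_congr rfl this, ← Finset.sum_filter, Finset.sum_const, nsmul_eq_mul,
      mul_comm]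
  linarith [hbig, hA, hB, hM1, hM2]


lemma sum_pow_card {m : ℕ} (t : ℝ) (ht : 0 ≤ t) :
    ∑ α : Fin m → Bool, t ^ ((univ.filter fun k => α k = false).card) = (1 + t) ^ m := by
  classical
  have h1 : ∀ α : Fin m → Bool,
      t ^ ((univ.filter fun k => α k = false).card) =
        ∏ k : Fin m, (if α k = false then t else 1) := by
    intro α
    rw [Finset.prod_ite, Finset.prod_const, Finset.prod_const, one_pow, mul_one]
  simp only [h1]
  have h2 : ∀ k : Fin m, ∑ s ∈ (univ : Finset Bool), (if s = false then t else 1) = 1 + t := by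
    intro k
    rw [Fintype.sum_bool]
    norm_num
  calc ∑ α : Fin m → Bool, ∏ k : Fin m, (if α k = false then t else 1)
      = ∑ α ∈ Fintype.piFinset (fun _ : Fin m => (univ : Finset Bool)),
          ∏ k : Fin m, (if α k = false then t else 1) := by
        rw [Fintype.piFinset_univ]
    _ = ∏ k : Fin m, ∑ s ∈ (univ : Finset Bool), (if s = false then t else 1) := by
        rw [Finset.prod_univ_sum]
    _ = ∏ k : Fin m, (1 + t) := Finset.prod_congr rfl (fun k _ => h2 k)
    _ = (1 + t) ^ m := by rw [Finset.prod_const, Finset.card_univ, Fintype.card_fin]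

lemma sum_pow_card' {m : ℕ} (t : ℝ) (ht : 0 ≤ t) :
    ∑ α : Fin m → Bool, t ^ (m - (univ.filter fun k => α k = false).card) = (1 + t) ^ m := by
  classical
  have h0 : ∀ α : Fin m → Bool,
      m - (univ.filter fun k => α k = false).card =
        (univ.filter fun k => α k = true).card := by
    intro α
    have := Finset.card_filter_add_card_filter_not
      (s := (univ : Finset (Fin m))) (p := fun k => α k = false)
    simp only [Finset.card_univ, Fintype.card_fin] at this
    have h' : (univ.filter fun k => ¬ α k = false).card =
        (univ.filter fun k => α k = true).card := by
      congr 1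
      apply Finset.filter_congr
      intro k _
      simp
    omega
  simp only [h0]
  have h1 : ∀ α : Fin m → Bool,
      t ^ ((univ.filter fun k => α k = true).card) =
        ∏ k : Fin m, (if α k = true then t else 1) := by
    intro α
    rw [Finset.prod_ite, Finset.prod_const, Finset.prod_const, one_pow, mul_one]
  simp only [h1]
  calc ∑ α : Fin m → Bool, ∏ k : Fin m, (if α k = true then t else 1)
      = ∑ α ∈ Fintype.piFinset (fun _ : Fin m => (univ : Finset Bool)),
          ∏ k : Fin m, (if α k = true then t else 1) := by
        rw [Fintype.piFinset_univ]
    _ = ∏ k : Fin m, ∑ s ∈ (univ : Finset Bool), (if s = true then t else 1) := by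
        rw [Finset.prod_univ_sum]
    _ = ∏ k : Fin m, (1 + t) := Finset.prod_congr rfl (fun k _ => by rw [Fintype.sum_bool]; simp; ring)
    _ = (1 + t) ^ m := by rw [Finset.prod_const, Finset.card_univ, Fintype.card_fin]

lemma sum_min_pow {m : ℕ} (t : ℝ) (ht : 0 ≤ t) (ht1 : t ≤ 1) :
    ∑ α : Fin m → Bool,
      t ^ (min ((univ.filter fun k => α k = false).card)
            (m - (univ.filter fun k => α k = false).card)) ≤ 2 * (1 + t) ^ m := by
  classical
  have key : ∀ α : Fin m → Bool,
      t ^ (min ((univ.filter fun k => α k = false).card)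
            (m - (univ.filter fun k => α k = false).card)) ≤
        t ^ ((univ.filter fun k => α k = false).card) +
        t ^ (m - (univ.filter fun k => α k = false).card) := by
    intro α
    rcases min_cases ((univ.filter fun k => α k = false).card)
      (m - (univ.filter fun k => α k = false).card) with ⟨h, -⟩ | ⟨h, -⟩ <;>
      rw [h] <;> nlinarith [pow_nonneg ht ((univ.filter fun k => α k = false).card),
        pow_nonneg ht (m - (univ.filter fun k => α k = false).card)]
  calc _ ≤ ∑ α : Fin m → Bool,
        (t ^ ((univ.filter fun k => α k = false).card) +
         t ^ (m - (univ.filter fun k => α k = false).card)) :=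
      Finset.sum_le_sum fun α _ => key α
    _ = 2 * (1 + t) ^ m := by
      rw [Finset.sum_add_distrib, sum_pow_card t ht, sum_pow_card' t ht]; ring


set_option maxHeartbeats 1000000 in
lemma core_bound {p m : ℕ} (lam : ℝ) (hlam : 0 < lam) (hm : 2 ≤ m)
    (a b : Fin m → Fin p) (ha : Function.Injective a) (hb : Function.Injective b)
    (hab : ∀ k k', a k ≠ b k')
    (G : SimpleGraph (Fin p))
    (hGaa : ∀ k k', k ≠ k' → G.Adj (a k) (a k'))
    (hGbb : ∀ k k', k ≠ k' → G.Adj (b k) (b k'))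
    (hGm : ∀ k, G.Adj (a k) (b k))
    (hGAB : ∀ u w, G.Adj u w → ((∃ k, u = a k) ∨ (∃ k, u = b k)) ∧
      ((∃ k, w = a k) ∨ (∃ k, w = b k)))
    (i j : Fin p) (hi : (∃ k, i = a k) ∨ (∃ k, i = b k))
    (hj : (∃ k, j = a k) ∨ (∃ k, j = b k)) :
    ∑ x : Fin p → Bool, (if x i = x j then 0 else Real.exp (lam * isingEnergy G x)) ≤
      6*(m:ℝ)^2 * Real.exp (-(lam * ((m:ℝ) - 1)) / 2) *
        ∑ x : Fin p → Bool, Real.exp (lam * isingEnergy G x) := by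
  classical
  set C : ℝ := 6*(m:ℝ)^2 with hCdef
  have hm1 : (2:ℝ) ≤ (m:ℝ) := by exact_mod_cast hm
  have hC24 : (24:ℝ) ≤ C := by rw [hCdef]; nlinarith
  have hCpos : (0:ℝ) < C := by linarith
  have hC1 : (1:ℝ) < C := by linarith
  have hlogC : 0 < Real.log C := Real.log_pos hC1
  have hZnn : (0:ℝ) ≤ ∑ x : Fin p → Bool, Real.exp (lam * isingEnergy G x) :=
    Finset.sum_nonneg fun x _ => (Real.exp_pos _).le
  by_cases hcase : lam * ((m:ℝ) - 1) / 2 ≤ Real.log C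
  · -- small lambda: trivial bound
    have h1 : (1:ℝ) ≤ C * Real.exp (-(lam * ((m:ℝ) - 1)) / 2) := by
      have he : Real.exp (lam * ((m:ℝ)-1) / 2) ≤ C := by
        calc Real.exp (lam * ((m:ℝ)-1) / 2) ≤ Real.exp (Real.log C) :=
              Real.exp_le_exp.mpr hcase
          _ = C := Real.exp_log hCpos
      have hrw : -(lam * ((m:ℝ) - 1)) / 2 = -(lam * ((m:ℝ)-1) / 2) := by ring
      rw [hrw, Real.exp_neg]
      have hinv : 0 < (Real.exp (lam * ((m:ℝ)-1) / 2))⁻¹ := by positivity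
      have hmc : Real.exp (lam*((m:ℝ)-1)/2) * (Real.exp (lam*((m:ℝ)-1)/2))⁻¹ = 1 :=
        mul_inv_cancel₀ (ne_of_gt (Real.exp_pos _))
      nlinarith [mul_nonneg (sub_nonneg.mpr he) hinv.le]
    calc ∑ x : Fin p → Bool, (if x i = x j then 0 else Real.exp (lam * isingEnergy G x))
        ≤ ∑ x : Fin p → Bool, Real.exp (lam * isingEnergy G x) := by
          refine Finset.sum_le_sum fun x _ => ?_
          split
          · exact (Real.exp_pos _).le
          · exact le_rfl
      _ ≤ C * Real.exp (-(lam * ((m:ℝ) - 1)) / 2) *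
            ∑ x : Fin p → Bool, Real.exp (lam * isingEnergy G x) :=
          le_mul_of_one_le_left hZnn h1
  · -- large lambda
    push_neg at hcase
    have hlam0 : 2 * Real.log C ≤ lam * ((m:ℝ) - 1) := by linarith
    have hCinv0 : (0:ℝ) ≤ C⁻¹ := by positivity
    have hCinv1 : C⁻¹ ≤ 1 := by
      rw [inv_le_one_iff₀]; right; linarith
    set Etop : ℝ := isingEnergy G (fun _ => true) with hEtop
    set cC : ℕ := Fintype.card {i : Fin p // ¬ (∃ k, i = a k) ∧ ¬ (∃ k, i = b k)} with hcC
    set F : (Fin m → Bool) → (Fin m → Bool) → ℝ := fun α β =>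
      Real.exp (-(lam * ((m:ℝ) - 1)) / 2) *
        C⁻¹ ^ (min ((univ.filter fun k => α k = false).card)
              (m - (univ.filter fun k => α k = false).card)
            + min ((univ.filter fun k => β k = false).card)
              (m - (univ.filter fun k => β k = false).card)) with hF
    -- pointwise bound
    have hpoint : ∀ x : Fin p → Bool,
        (if x i = x j then 0 else Real.exp (lam * isingEnergy G x)) ≤
          Real.exp (lam * Etop) * F (fun k => x (a k)) (fun k => x (b k)) := by
      intro x
      by_cases hxij : x i = x j
      · rw [if_pos hxij]
        have : 0 ≤ F (fun k => x (a k)) (fun k => x (b k)) := by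
          rw [hF]; positivity
        positivity
      rw [if_neg hxij]
      set dA := (univ.filter fun k => x (a k) = false).card with hdA
      set dB := (univ.filter fun k => x (b k) = false).card with hdB
      set dM := (univ.filter fun k => x (a k) ≠ x (b k)).card with hdM
      have hdAm : dA ≤ m := by
        rw [hdA]
        calc (univ.filter fun k => x (a k) = false).card ≤ (univ : Finset (Fin m)).card :=
              Finset.card_filter_le _ _
          _ = m := by simp
      have hdBm : dB ≤ m := by
        rw [hdB]
        calc (univ.filter fun k => x (b k) = false).card ≤ (univ : Finset (Fin m)).card :=
              Finset.card_filter_le _ _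
          _ = m := by simp
      set u := min dA (m - dA) with hu
      set v := min dB (m - dB) with hv
      have hFx : F (fun k => x (a k)) (fun k => x (b k)) =
          Real.exp (-(lam * ((m:ℝ) - 1)) / 2) * C⁻¹ ^ (u + v) := rfl
      rw [hFx]
      have hEdef := energy_deficit G a b ha hb hab hGaa hGbb hGm x
      rw [← hdA, ← hdB, ← hdM, ← hEtop] at hEdef
      have hu1 : (u:ℝ) ≤ (dA:ℝ) := by exact_mod_cast min_le_left dA (m - dA)
      have hu2 : (u:ℝ) ≤ (m:ℝ) - (dA:ℝ) := by
        have h' : (u:ℝ) ≤ ((m - dA : ℕ):ℝ) := by exact_mod_cast min_le_right dA (m - dA)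
        rwa [Nat.cast_sub hdAm] at h'
      have hv1 : (v:ℝ) ≤ (dB:ℝ) := by exact_mod_cast min_le_left dB (m - dB)
      have hv2 : (v:ℝ) ≤ (m:ℝ) - (dB:ℝ) := by
        have h' : (v:ℝ) ≤ ((m - dB : ℕ):ℝ) := by exact_mod_cast min_le_right dB (m - dB)
        rwa [Nat.cast_sub hdBm] at h'
      have hprodA : (dA:ℝ) * ((m:ℝ) - (dA:ℝ)) = (u:ℝ) * ((m:ℝ) - (u:ℝ)) := by
        rcases min_cases dA (m - dA) with ⟨h, -⟩ | ⟨h, -⟩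
        · rw [hu, h]
        · rw [hu, h, Nat.cast_sub hdAm]; ring
      have hprodB : (dB:ℝ) * ((m:ℝ) - (dB:ℝ)) = (v:ℝ) * ((m:ℝ) - (v:ℝ)) := by
        rcases min_cases dB (m - dB) with ⟨h, -⟩ | ⟨h, -⟩
        · rw [hv, h]
        · rw [hv, h, Nat.cast_sub hdBm]; ring
      have hunn : (0:ℝ) ≤ (u:ℝ) := Nat.cast_nonneg _
      have hvnn : (0:ℝ) ≤ (v:ℝ) := Nat.cast_nonneg _
      have hdMnn : (0:ℝ) ≤ (dM:ℝ) := Nat.cast_nonneg _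
      rw [hprodA, hprodB] at hEdef
      -- the key linear inequality
      have hkey : lam * ((m:ℝ)-1)/2 + ((u:ℝ)+(v:ℝ)) * Real.log C ≤
          lam * Etop - lam * isingEnergy G x := by
        by_cases hUV : u + v = 0
        · have hu0 : u = 0 := by omega
          have hv0 : v = 0 := by omega
          have hAall : dA = 0 ∨ dA = m := by
            rcases Nat.min_eq_zero_iff.mp hu0 with h | h
            · exact Or.inl h
            · right; omega
          have hBall : dB = 0 ∨ dB = m := by
            rcases Nat.min_eq_zero_iff.mp hv0 with h | h
            · exact Or.inl h
            · right; omega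
          have hA0 : dA = 0 → ∀ k, x (a k) = true := by
            intro h k
            have hemp : (univ.filter fun k => x (a k) = false) = ∅ :=
              Finset.card_eq_zero.mp h
            by_contra hc
            have hk : k ∈ (univ.filter fun k => x (a k) = false) := by
              simp only [Finset.mem_filter, Finset.mem_univ, true_and]
              exact Bool.not_eq_true _ ▸ (by simpa using hc)
            rw [hemp] at hk
            exact absurd hk (Finset.notMem_empty k)
          have hAm : dA = m → ∀ k, x (a k) = false := by
            intro h k
            have huniv : (univ.filter fun k => x (a k) = false) = univ := by
              apply Finset.eq_univ_of_card
              rw [← hdA, h]; simp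
            have hk : k ∈ (univ.filter fun k => x (a k) = false) := by
              rw [huniv]; exact Finset.mem_univ k
            exact (Finset.mem_filter.mp hk).2
          have hB0 : dB = 0 → ∀ k, x (b k) = true := by
            intro h k
            have hemp : (univ.filter fun k => x (b k) = false) = ∅ :=
              Finset.card_eq_zero.mp h
            by_contra hc
            have hk : k ∈ (univ.filter fun k => x (b k) = false) := by
              simp only [Finset.mem_filter, Finset.mem_univ, true_and]
              exact Bool.not_eq_true _ ▸ (by simpa using hc)
            rw [hemp] at hk
            exact absurd hk (Finset.notMem_empty k)
          have hBm : dB = m → ∀ k, x (b k) = false := by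
            intro h k
            have huniv : (univ.filter fun k => x (b k) = false) = univ := by
              apply Finset.eq_univ_of_card
              rw [← hdB, h]; simp
            have hk : k ∈ (univ.filter fun k => x (b k) = false) := by
              rw [huniv]; exact Finset.mem_univ k
            exact (Finset.mem_filter.mp hk).2
          have hdMm : (dM:ℝ) = (m:ℝ) := by
            have : (univ.filter fun k => x (a k) ≠ x (b k)) = univ := by
              apply Finset.eq_univ_iff_forall.mpr
              intro k
              simp only [Finset.mem_filter, Finset.mem_univ, true_and]
              rcases hAall with h0 | hmm <;> rcases hBall with h0' | hmm'
              · -- all true : contradiction with event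
                exfalso
                have hxi : x i = true := by
                  rcases hi with ⟨k', rfl⟩ | ⟨k', rfl⟩
                  exacts [hA0 h0 k', hB0 h0' k']
                have hxj : x j = true := by
                  rcases hj with ⟨k', rfl⟩ | ⟨k', rfl⟩
                  exacts [hA0 h0 k', hB0 h0' k']
                rw [hxi, hxj] at hxij; exact hxij rfl
              · rw [hA0 h0 k, hBm hmm' k]; simp
              · rw [hAm hmm k, hB0 h0' k]; simp
              · exfalso
                have hxi : x i = false := by
                  rcases hi with ⟨k', rfl⟩ | ⟨k', rfl⟩
                  exacts [hAm hmm k', hBm hmm' k']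
                have hxj : x j = false := by
                  rcases hj with ⟨k', rfl⟩ | ⟨k', rfl⟩
                  exacts [hAm hmm k', hBm hmm' k']
                rw [hxi, hxj] at hxij; exact hxij rfl
            rw [hdM, this]; simp
          have hu0R : (u:ℝ) = 0 := by rw [hu0]; simp
          have hv0R : (v:ℝ) = 0 := by rw [hv0]; simp
          rw [hu0R, hv0R]
          have hE2 := mul_le_mul_of_nonneg_left hEdef hlam.le
          rw [hu0R, hv0R, hdMm] at hE2
          have hnn : 0 ≤ lam * (3*(m:ℝ)+1) := mul_nonneg hlam.le (by linarith)
          nlinarith [hE2, hnn]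
        · have hUV1 : (1:ℝ) ≤ (u:ℝ) + (v:ℝ) := by
            have : 1 ≤ u + v := Nat.one_le_iff_ne_zero.mpr hUV
            exact_mod_cast this
          have h2u : 2*(u:ℝ) ≤ (m:ℝ) := by linarith
          have h2v : 2*(v:ℝ) ≤ (m:ℝ) := by linarith
          have hqA : (u:ℝ)*((m:ℝ)-1)/2 ≤ (u:ℝ)*((m:ℝ)-(u:ℝ)) := by
            nlinarith [mul_nonneg hunn (show (0:ℝ) ≤ (m:ℝ)+1-2*(u:ℝ) by linarith)]
          have hqB : (v:ℝ)*((m:ℝ)-1)/2 ≤ (v:ℝ)*((m:ℝ)-(v:ℝ)) := by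
            nlinarith [mul_nonneg hvnn (show (0:ℝ) ≤ (m:ℝ)+1-2*(v:ℝ) by linarith)]
          have t1 : ((m:ℝ)-1)*((u:ℝ)+(v:ℝ)) ≤
              2*((u:ℝ)*((m:ℝ)-(u:ℝ)) + (v:ℝ)*((m:ℝ)-(v:ℝ)) + (dM:ℝ)) := by
            nlinarith [hqA, hqB, hdMnn]
          have s1 : lam * (((m:ℝ)-1)*((u:ℝ)+(v:ℝ))) ≤ lam * Etop - lam * isingEnergy G x := by
            have h1' := mul_le_mul_of_nonneg_left t1 hlam.le
            have h2' := mul_le_mul_of_nonneg_left hEdef hlam.le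
            nlinarith [h1', h2']
          have s2 : lam * ((m:ℝ)-1)/2 + ((u:ℝ)+(v:ℝ)) * Real.log C ≤
              lam * (((m:ℝ)-1)*((u:ℝ)+(v:ℝ))) := by
            have hfact := mul_le_mul_of_nonneg_right hlam0
              (show (0:ℝ) ≤ (u:ℝ)+(v:ℝ) - 1/2 by linarith)
            have hfact2 : 0 ≤ Real.log C * ((u:ℝ)+(v:ℝ) - 1) :=
              mul_nonneg hlogC.le (by linarith)
            nlinarith
          linarith
      -- convert to exponential form
      have hexp := Real.exp_le_exp.mpr
        (show lam * isingEnergy G x ≤ lam * Etop + (-(lam * ((m:ℝ) - 1)) / 2) +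
          ((u+v:ℕ):ℝ) * (-(Real.log C)) by push_cast; linarith [hkey])
      calc Real.exp (lam * isingEnergy G x)
          ≤ Real.exp (lam * Etop + (-(lam * ((m:ℝ) - 1)) / 2) +
              ((u+v:ℕ):ℝ) * (-(Real.log C))) := hexp
        _ = Real.exp (lam * Etop) * (Real.exp (-(lam * ((m:ℝ) - 1)) / 2) * C⁻¹ ^ (u + v)) := by
            rw [Real.exp_add, Real.exp_add]
            have hpow : Real.exp (((u+v:ℕ):ℝ) * (-(Real.log C))) = C⁻¹ ^ (u + v) := by
              rw [Real.exp_nat_mul, Real.exp_neg, Real.exp_log hCpos]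
            rw [hpow, mul_assoc]
    -- assemble the sum bounds
    have hsum1 : ∑ x : Fin p → Bool, (if x i = x j then 0 else Real.exp (lam * isingEnergy G x))
        ≤ ∑ x : Fin p → Bool, Real.exp (lam * Etop) * F (fun k => x (a k)) (fun k => x (b k)) :=
      Finset.sum_le_sum fun x _ => hpoint x
    have hsum2 : ∑ x : Fin p → Bool,
        Real.exp (lam * Etop) * F (fun k => x (a k)) (fun k => x (b k)) =
        Real.exp (lam * Etop) * ((2:ℝ) ^ cC *
          ∑ α : Fin m → Bool, ∑ β : Fin m → Bool, F α β) := by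
      rw [← Finset.mul_sum, sum_factor a b ha hb hab F]
    have hps : (0:ℝ) ≤ ∑ α : Fin m → Bool,
        C⁻¹ ^ (min ((univ.filter fun k => α k = false).card)
          (m - (univ.filter fun k => α k = false).card)) :=
      Finset.sum_nonneg fun α _ => pow_nonneg hCinv0 _
    have hsplit : ∑ α : Fin m → Bool, ∑ β : Fin m → Bool, F α β =
        Real.exp (-(lam * ((m:ℝ) - 1)) / 2) *
          ((∑ α : Fin m → Bool, C⁻¹ ^ (min ((univ.filter fun k => α k = false).card)
              (m - (univ.filter fun k => α k = false).card))) *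
           (∑ β : Fin m → Bool, C⁻¹ ^ (min ((univ.filter fun k => β k = false).card)
              (m - (univ.filter fun k => β k = false).card)))) := by
      rw [Finset.sum_mul_sum, Finset.mul_sum]
      refine Finset.sum_congr rfl fun α _ => ?_
      rw [Finset.mul_sum]
      refine Finset.sum_congr rfl fun β _ => ?_
      rw [hF]
      simp only []
      rw [pow_add]
      try ring
    have hmin := sum_min_pow (m := m) C⁻¹ hCinv0 hCinv1
    have hexpm : (1 + C⁻¹)^m ≤ Real.exp (1/2) := by
      have h1 : (1 + C⁻¹) ≤ Real.exp C⁻¹ := by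
        have := Real.add_one_le_exp C⁻¹; linarith
      have h2 : (1 + C⁻¹)^m ≤ (Real.exp C⁻¹)^m := pow_le_pow_left₀ (by positivity) h1 m
      have h3 : (Real.exp C⁻¹)^m = Real.exp ((m:ℝ) * C⁻¹) := (Real.exp_nat_mul _ m).symm
      have h4 : (m:ℝ) * C⁻¹ ≤ 1/2 := by
        have hmC : 2 * (m:ℝ) ≤ C := by rw [hCdef]; nlinarith
        have := mul_le_mul_of_nonneg_right hmC hCinv0
        rw [mul_inv_cancel₀ (ne_of_gt hCpos)] at this
        linarith
      calc (1 + C⁻¹)^m ≤ (Real.exp C⁻¹)^m := h2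
        _ = Real.exp ((m:ℝ) * C⁻¹) := h3
        _ ≤ Real.exp (1/2) := Real.exp_le_exp.mpr h4
    have hehalf : Real.exp (1/2) ≤ 1.7 := by
      have h2 : Real.exp (1/2) * Real.exp (1/2) = Real.exp 1 := by
        rw [← Real.exp_add]; norm_num
      nlinarith [Real.exp_one_lt_d9, Real.exp_pos (1/2), h2]
    have hSone : ∑ α : Fin m → Bool,
        C⁻¹ ^ (min ((univ.filter fun k => α k = false).card)
          (m - (univ.filter fun k => α k = false).card)) ≤ (17/5 : ℝ) := by
      calc _ ≤ 2 * (1 + C⁻¹)^m := hmin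
        _ ≤ 2 * Real.exp (1/2) := by linarith
        _ ≤ 17/5 := by linarith [hehalf]
    have hdouble : ∑ α : Fin m → Bool, ∑ β : Fin m → Bool, F α β ≤
        Real.exp (-(lam * ((m:ℝ) - 1)) / 2) * C := by
      rw [hsplit]
      refine mul_le_mul_of_nonneg_left ?_ (Real.exp_pos _).le
      nlinarith [hps, hSone, hC24]
    -- lower bound on the partition function
    have hEeq : ∀ x : Fin p → Bool, (∀ k, x (a k) = true) → (∀ k, x (b k) = true) →
        isingEnergy G x = Etop := by
      intro x hxa hxb
      rw [hEtop]
      unfold isingEnergy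
      congr 1
      refine Finset.sum_congr rfl fun i' _ => Finset.sum_congr rfl fun j' _ => ?_
      by_cases hadj : G.Adj i' j'
      · rw [if_pos hadj, if_pos hadj]
        obtain ⟨hi', hj'⟩ := hGAB _ _ hadj
        have hxi : x i' = true := by
          rcases hi' with ⟨k, rfl⟩ | ⟨k, rfl⟩
          exacts [hxa k, hxb k]
        have hxj : x j' = true := by
          rcases hj' with ⟨k, rfl⟩ | ⟨k, rfl⟩
          exacts [hxa k, hxb k]
        rw [hxi, hxj]
      · rw [if_neg hadj, if_neg hadj]
    set Fz : (Fin m → Bool) → (Fin m → Bool) → ℝ := fun α β =>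
      if α = (fun _ => true) then (if β = (fun _ => true) then Real.exp (lam * Etop) else 0)
        else 0 with hFz
    have hZlow : (2:ℝ) ^ cC * Real.exp (lam * Etop) ≤
        ∑ x : Fin p → Bool, Real.exp (lam * isingEnergy G x) := by
      have hpz : ∀ x : Fin p → Bool, Fz (fun k => x (a k)) (fun k => x (b k)) ≤
          Real.exp (lam * isingEnergy G x) := by
        intro x
        rw [hFz]
        simp only []
        by_cases h1 : (fun k => x (a k)) = (fun _ : Fin m => true)
        · rw [if_pos h1]
          by_cases h2 : (fun k => x (b k)) = (fun _ : Fin m => true)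
          · rw [if_pos h2, hEeq x (fun k => congrFun h1 k) (fun k => congrFun h2 k)]
          · rw [if_neg h2]; positivity
        · rw [if_neg h1]; positivity
      have hzz : ∑ α : Fin m → Bool, ∑ β : Fin m → Bool, Fz α β = Real.exp (lam * Etop) := by
        have hin : ∀ α : Fin m → Bool, ∑ β : Fin m → Bool, Fz α β =
            if α = (fun _ => true) then Real.exp (lam * Etop) else 0 := by
          intro α
          rw [hFz]
          simp only []
          by_cases h : α = (fun _ : Fin m => true) <;> simp [h]
        rw [Finset.sum_congr rfl fun α _ => hin α]
        simp
      calc (2:ℝ) ^ cC * Real.exp (lam * Etop)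
          = ∑ x : Fin p → Bool, Fz (fun k => x (a k)) (fun k => x (b k)) := by
            rw [sum_factor a b ha hb hab Fz, hzz]
        _ ≤ ∑ x : Fin p → Bool, Real.exp (lam * isingEnergy G x) :=
            Finset.sum_le_sum fun x _ => hpz x
    -- final chain
    calc ∑ x : Fin p → Bool, (if x i = x j then 0 else Real.exp (lam * isingEnergy G x))
        ≤ Real.exp (lam * Etop) * ((2:ℝ) ^ cC *
            ∑ α : Fin m → Bool, ∑ β : Fin m → Bool, F α β) := by
          rw [← hsum2]; exact hsum1
      _ ≤ Real.exp (lam * Etop) * ((2:ℝ) ^ cC *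
            (Real.exp (-(lam * ((m:ℝ) - 1)) / 2) * C)) := by
          refine mul_le_mul_of_nonneg_left ?_ (Real.exp_pos _).le
          exact mul_le_mul_of_nonneg_left hdouble (by positivity)
      _ = C * Real.exp (-(lam * ((m:ℝ) - 1)) / 2) * ((2:ℝ) ^ cC * Real.exp (lam * Etop)) := by
          ring
      _ ≤ C * Real.exp (-(lam * ((m:ℝ) - 1)) / 2) *
            ∑ x : Fin p → Bool, Real.exp (lam * isingEnergy G x) := by
          refine mul_le_mul_of_nonneg_left hZlow (by positivity)


set_option maxHeartbeats 1000000 in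
/-- KL divergence from a graph of Ensemble 3 (two `m`-cliques
joined by a perfect matching, plus arbitrary extra cross edges) to the full
`2m`-clique (Lemma 5 of the paper). -/
theorem kl_building_block_to_clique {p m : ℕ} (lam : ℝ) (hlam : 0 < lam)
    (hm : 2 ≤ m) (hp : 2 * m ≤ p)
    (a b : Fin m → Fin p)
    (ha : Function.Injective a) (hb : Function.Injective b)
    (hab : ∀ k k', a k ≠ b k')
    (G0 G K : SimpleGraph (Fin p))
    (hG0 : ∀ u w, G0.Adj u w ↔
      (u ≠ w ∧ ((∃ k k', u = a k ∧ w = a k') ∨ (∃ k k', u = b k ∧ w = b k'))) ∨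
      (∃ k, (u = a k ∧ w = b k) ∨ (u = b k ∧ w = a k)))
    (hK : ∀ u w, K.Adj u w ↔ u ≠ w ∧
      ((∃ k, u = a k) ∨ (∃ k, u = b k)) ∧ ((∃ k, w = a k) ∨ (∃ k, w = b k)))
    (hG0G : G0 ≤ G)
    (hGK : ∀ u w, G.Adj u w → G0.Adj u w ∨
      (((∃ k, u = a k) ∧ (∃ k, w = b k)) ∨ ((∃ k, u = b k) ∧ (∃ k, w = a k)))) :
    isingKL lam G K ≤
      12 * lam * (m : ℝ) ^ 4 * Real.exp (-(lam * ((m : ℝ) - 1)) / 2) := by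
  classical
  -- basic graph facts
  have hGaa : ∀ k k', k ≠ k' → G.Adj (a k) (a k') := by
    intro k k' hkk
    apply hG0G
    rw [hG0]
    exact Or.inl ⟨fun h => hkk (ha h), Or.inl ⟨k, k', rfl, rfl⟩⟩
  have hGbb : ∀ k k', k ≠ k' → G.Adj (b k) (b k') := by
    intro k k' hkk
    apply hG0G
    rw [hG0]
    exact Or.inl ⟨fun h => hkk (hb h), Or.inr ⟨k, k', rfl, rfl⟩⟩
  have hGm : ∀ k, G.Adj (a k) (b k) := by
    intro k
    apply hG0G
    rw [hG0]
    exact Or.inr ⟨k, Or.inl ⟨rfl, rfl⟩⟩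
  have hG0AB : ∀ u w, G0.Adj u w → ((∃ k, u = a k) ∨ (∃ k, u = b k)) ∧
      ((∃ k, w = a k) ∨ (∃ k, w = b k)) := by
    intro u w h
    rw [hG0] at h
    rcases h with ⟨-, ⟨k, k', rfl, rfl⟩ | ⟨k, k', rfl, rfl⟩⟩ | ⟨k, ⟨rfl, rfl⟩ | ⟨rfl, rfl⟩⟩
    · exact ⟨Or.inl ⟨k, rfl⟩, Or.inl ⟨k', rfl⟩⟩
    · exact ⟨Or.inr ⟨k, rfl⟩, Or.inr ⟨k', rfl⟩⟩
    · exact ⟨Or.inl ⟨k, rfl⟩, Or.inr ⟨k, rfl⟩⟩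
    · exact ⟨Or.inr ⟨k, rfl⟩, Or.inl ⟨k, rfl⟩⟩
  have hGAB : ∀ u w, G.Adj u w → ((∃ k, u = a k) ∨ (∃ k, u = b k)) ∧
      ((∃ k, w = a k) ∨ (∃ k, w = b k)) := by
    intro u w h
    rcases hGK u w h with h' | ⟨⟨hu, hw⟩ | ⟨hu, hw⟩⟩
    · exact hG0AB u w h'
    · exact ⟨Or.inl hu, Or.inr hw⟩
    · exact ⟨Or.inr hu, Or.inl hw⟩
  have hGsub : ∀ u w, G.Adj u w → K.Adj u w := by
    intro u w h
    rw [hK]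
    exact ⟨G.ne_of_adj h, (hGAB u w h).1, (hGAB u w h).2⟩
  -- positivity
  have hZG : 0 < isingZ lam G := Finset.sum_pos (fun x _ => Real.exp_pos _) ⟨fun _ => true, Finset.mem_univ _⟩
  have hZK : 0 < isingZ lam K := Finset.sum_pos (fun x _ => Real.exp_pos _) ⟨fun _ => true, Finset.mem_univ _⟩
  have hPnn : ∀ x : Fin p → Bool, 0 ≤ isingP lam G x := by
    intro x; unfold isingP; positivity
  -- log-ratio identity
  have hlog : ∀ x : Fin p → Bool, Real.log (isingP lam G x / isingP lam K x) =
      lam * isingEnergy G x - lam * isingEnergy K x +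
        (Real.log (isingZ lam K) - Real.log (isingZ lam G)) := by
    intro x
    unfold isingP
    rw [Real.log_div (by positivity) (by positivity),
      Real.log_div (Real.exp_ne_zero _) hZG.ne',
      Real.log_div (Real.exp_ne_zero _) hZK.ne',
      Real.log_exp, Real.log_exp]
    ring
  -- the set of missing (ordered) edges
  set S : Finset (Fin p × Fin p) :=
    univ.filter (fun q => K.Adj q.1 q.2 ∧ ¬ G.Adj q.1 q.2) with hS
  -- energy difference formula
  have hdiffE : ∀ x : Fin p → Bool, isingEnergy K x - isingEnergy G x =
      (1/2) * ∑ q ∈ S, confVal (x q.1) * confVal (x q.2) := by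
    intro x
    unfold isingEnergy
    rw [← mul_sub]
    congr 1
    rw [← Finset.sum_sub_distrib]
    have hper : ∀ i' : Fin p,
        (∑ j' : Fin p, if K.Adj i' j' then confVal (x i') * confVal (x j') else 0) -
        (∑ j' : Fin p, if G.Adj i' j' then confVal (x i') * confVal (x j') else 0) =
        ∑ j' : Fin p, (if K.Adj i' j' ∧ ¬ G.Adj i' j'
          then confVal (x i') * confVal (x j') else 0) := by
      intro i'
      rw [← Finset.sum_sub_distrib]
      refine Finset.sum_congr rfl fun j' _ => ?_
      by_cases hg : G.Adj i' j'
      · rw [if_pos hg, if_pos (hGsub _ _ hg), if_neg (by tauto)]; ring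
      · by_cases hk : K.Adj i' j'
        · rw [if_pos hk, if_neg hg, if_pos ⟨hk, hg⟩]; ring
        · rw [if_neg hk, if_neg hg, if_neg (by tauto)]; ring
    rw [Finset.sum_congr rfl fun i' _ => hper i']
    rw [hS, Finset.sum_filter]
    exact (Fintype.sum_prod_type (fun q : Fin p × Fin p =>
      if K.Adj q.1 q.2 ∧ ¬ G.Adj q.1 q.2 then confVal (x q.1) * confVal (x q.2) else 0)).symm
  -- pointwise energy comparison
  have hEcomp : ∀ x : Fin p → Bool,
      isingEnergy K x ≤ isingEnergy G x + (S.card : ℝ) / 2 := by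
    intro x
    have h1 : ∑ q ∈ S, confVal (x q.1) * confVal (x q.2) ≤ (S.card : ℝ) := by
      calc ∑ q ∈ S, confVal (x q.1) * confVal (x q.2) ≤ ∑ q ∈ S, (1:ℝ) :=
            Finset.sum_le_sum fun q _ => confVal_mul_le_one _ _
        _ = (S.card : ℝ) := by rw [Finset.sum_const]; simp
    have := hdiffE x
    linarith
  -- partition function comparison
  have hlogZ : Real.log (isingZ lam K) - Real.log (isingZ lam G) ≤
      lam * ((S.card : ℝ) / 2) := by
    have hZle : isingZ lam K ≤ Real.exp (lam * ((S.card : ℝ)/2)) * isingZ lam G := by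
      unfold isingZ
      rw [Finset.mul_sum]
      refine Finset.sum_le_sum fun x _ => ?_
      rw [← Real.exp_add]
      apply Real.exp_le_exp.mpr
      have := hEcomp x
      nlinarith [hEcomp x, hlam]
    have h2 : Real.log (isingZ lam K) ≤ Real.log (Real.exp (lam * ((S.card:ℝ)/2)) * isingZ lam G) :=
      Real.log_le_log hZK hZle
    rw [Real.log_mul (Real.exp_ne_zero _) hZG.ne', Real.log_exp] at h2
    linarith
  -- KL expansion
  have hKL : isingKL lam G K = ∑ x : Fin p → Bool, isingP lam G x *
      (lam * isingEnergy G x - lam * isingEnergy K x +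
        (Real.log (isingZ lam K) - Real.log (isingZ lam G))) := by
    unfold isingKL
    exact Finset.sum_congr rfl fun x _ => by rw [hlog x]
  -- bound each summand's增量
  have hKL2 : isingKL lam G K ≤ ∑ x : Fin p → Bool, isingP lam G x *
      (lam * ((1/2) * ∑ q ∈ S, (1 - confVal (x q.1) * confVal (x q.2)))) := by
    rw [hKL]
    refine Finset.sum_le_sum fun x _ => ?_
    refine mul_le_mul_of_nonneg_left ?_ (hPnn x)
    have hd := hdiffE x
    have hcardsum : ∑ q ∈ S, (1 - confVal (x q.1) * confVal (x q.2)) =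
        (S.card : ℝ) - ∑ q ∈ S, confVal (x q.1) * confVal (x q.2) := by
      rw [Finset.sum_sub_distrib, Finset.sum_const]; simp
    rw [hcardsum]
    nlinarith [hlogZ, hd, hlam]
  -- swap sums
  have hswap : ∑ x : Fin p → Bool, isingP lam G x *
      (lam * ((1/2) * ∑ q ∈ S, (1 - confVal (x q.1) * confVal (x q.2)))) =
      lam * (1/2) * ∑ q ∈ S, (∑ x : Fin p → Bool,
        isingP lam G x * (1 - confVal (x q.1) * confVal (x q.2))) := by
    have hper : ∀ x : Fin p → Bool, isingP lam G x *
        (lam * ((1/2) * ∑ q ∈ S, (1 - confVal (x q.1) * confVal (x q.2)))) =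
        ∑ q ∈ S, lam * (1/2) *
          (isingP lam G x * (1 - confVal (x q.1) * confVal (x q.2))) := by
      intro x
      calc isingP lam G x *
          (lam * ((1/2) * ∑ q ∈ S, (1 - confVal (x q.1) * confVal (x q.2))))
          = (lam * (1/2) * isingP lam G x) *
              ∑ q ∈ S, (1 - confVal (x q.1) * confVal (x q.2)) := by ring
        _ = ∑ q ∈ S, (lam * (1/2) * isingP lam G x) *
              (1 - confVal (x q.1) * confVal (x q.2)) := Finset.mul_sum _ _ _
        _ = ∑ q ∈ S, lam * (1/2) *
              (isingP lam G x * (1 - confVal (x q.1) * confVal (x q.2))) :=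
            Finset.sum_congr rfl fun q _ => by ring
    rw [Finset.sum_congr rfl fun x _ => hper x]
    rw [Finset.sum_comm]
    rw [Finset.mul_sum]
    exact Finset.sum_congr rfl fun q _ => (Finset.mul_sum _ _ _).symm
  -- per-edge bound
  have hedge : ∀ q : Fin p × Fin p, q ∈ S →
      ∑ x : Fin p → Bool, isingP lam G x * (1 - confVal (x q.1) * confVal (x q.2)) ≤
        12 * (m:ℝ)^2 * Real.exp (-(lam * ((m:ℝ) - 1)) / 2) := by
    intro q hq
    rw [hS, Finset.mem_filter] at hq
    obtain ⟨-, hkadj, -⟩ := hq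
    rw [hK] at hkadj
    obtain ⟨-, hq1, hq2⟩ := hkadj
    have hterm : ∀ x : Fin p → Bool,
        isingP lam G x * (1 - confVal (x q.1) * confVal (x q.2)) =
          2 * (if x q.1 = x q.2 then 0 else Real.exp (lam * isingEnergy G x)) / isingZ lam G := by
      intro x
      unfold isingP
      rw [confVal_mul_eq]
      by_cases h : x q.1 = x q.2
      · rw [if_pos h, if_pos h]; ring
      · rw [if_neg h, if_neg h]; ring
    rw [Finset.sum_congr rfl fun x _ => hterm x]
    rw [← Finset.sum_div, ← Finset.mul_sum]
    rw [div_le_iff₀ hZG]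
    have hcb := core_bound lam hlam hm a b ha hb hab G hGaa hGbb hGm hGAB q.1 q.2 hq1 hq2
    unfold isingZ
    nlinarith [hcb, Real.exp_pos (-(lam * ((m:ℝ) - 1)) / 2), hZG]
  -- the cardinality bound
  have hcard : (S.card : ℝ) ≤ 2 * (m:ℝ)^2 := by
    have hsub : S ⊆ (univ.image fun q : Fin m × Fin m => (a q.1, b q.2)) ∪
        (univ.image fun q : Fin m × Fin m => (b q.1, a q.2)) := by
      intro q hq
      rw [hS, Finset.mem_filter] at hq
      obtain ⟨-, hkadj, hgn⟩ := hq
      rw [hK] at hkadj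
      obtain ⟨hne, hq1, hq2⟩ := hkadj
      rw [Finset.mem_union, Finset.mem_image, Finset.mem_image]
      rcases hq1 with ⟨k, hk1⟩ | ⟨k, hk1⟩ <;> rcases hq2 with ⟨k', hk2⟩ | ⟨k', hk2⟩
      · exfalso
        apply hgn
        apply hG0G
        rw [hG0]
        refine Or.inl ⟨hne, Or.inl ⟨k, k', hk1, hk2⟩⟩
      · exact Or.inl ⟨(k, k'), Finset.mem_univ _, by rw [← hk1, ← hk2]⟩
      · exact Or.inr ⟨(k, k'), Finset.mem_univ _, by rw [← hk1, ← hk2]⟩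
      · exfalso
        apply hgn
        apply hG0G
        rw [hG0]
        refine Or.inl ⟨hne, Or.inr ⟨k, k', hk1, hk2⟩⟩
    have h1 := Finset.card_le_card hsub
    have h2 := Finset.card_union_le (univ.image fun q : Fin m × Fin m => (a q.1, b q.2))
      (univ.image fun q : Fin m × Fin m => (b q.1, a q.2))
    have h3 := Finset.card_image_le (s := (univ : Finset (Fin m × Fin m)))
      (f := fun q : Fin m × Fin m => (a q.1, b q.2))
    have h4 := Finset.card_image_le (s := (univ : Finset (Fin m × Fin m)))
      (f := fun q : Fin m × Fin m => (b q.1, a q.2))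
    have h5 : (univ : Finset (Fin m × Fin m)).card = m * m := by simp
    have : S.card ≤ 2 * (m * m) := by omega
    calc (S.card : ℝ) ≤ (2 * (m * m) : ℕ) := by exact_mod_cast this
      _ = 2 * (m:ℝ)^2 := by push_cast; ring
  -- put everything together
  have hexpnn : (0:ℝ) < Real.exp (-(lam * ((m:ℝ) - 1)) / 2) := Real.exp_pos _
  have hfinal : lam * (1/2) * ∑ q ∈ S, (∑ x : Fin p → Bool,
      isingP lam G x * (1 - confVal (x q.1) * confVal (x q.2))) ≤
      12 * lam * (m:ℝ)^4 * Real.exp (-(lam * ((m:ℝ) - 1)) / 2) := by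
    have hsum : ∑ q ∈ S, (∑ x : Fin p → Bool,
        isingP lam G x * (1 - confVal (x q.1) * confVal (x q.2))) ≤
        (S.card : ℝ) * (12 * (m:ℝ)^2 * Real.exp (-(lam * ((m:ℝ) - 1)) / 2)) := by
      calc ∑ q ∈ S, (∑ x : Fin p → Bool,
          isingP lam G x * (1 - confVal (x q.1) * confVal (x q.2)))
          ≤ ∑ q ∈ S, (12 * (m:ℝ)^2 * Real.exp (-(lam * ((m:ℝ) - 1)) / 2)) :=
            Finset.sum_le_sum hedge
        _ = (S.card : ℝ) * (12 * (m:ℝ)^2 * Real.exp (-(lam * ((m:ℝ) - 1)) / 2)) := by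
            rw [Finset.sum_const]; simp [mul_comm]
    have hmnn : (0:ℝ) ≤ (m:ℝ) := Nat.cast_nonneg m
    calc lam * (1/2) * ∑ q ∈ S, (∑ x : Fin p → Bool,
        isingP lam G x * (1 - confVal (x q.1) * confVal (x q.2)))
        ≤ lam * (1/2) * ((S.card : ℝ) *
            (12 * (m:ℝ)^2 * Real.exp (-(lam * ((m:ℝ) - 1)) / 2))) := by
          apply mul_le_mul_of_nonneg_left hsum (by positivity)
      _ ≤ lam * (1/2) * ((2 * (m:ℝ)^2) *
            (12 * (m:ℝ)^2 * Real.exp (-(lam * ((m:ℝ) - 1)) / 2))) := by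
          apply mul_le_mul_of_nonneg_left _ (by positivity)
          apply mul_le_mul_of_nonneg_right hcard (by positivity)
      _ = 12 * lam * (m:ℝ)^4 * Real.exp (-(lam * ((m:ℝ) - 1)) / 2) := by ring
  calc isingKL lam G K
      ≤ ∑ x : Fin p → Bool, isingP lam G x *
        (lam * ((1/2) * ∑ q ∈ S, (1 - confVal (x q.1) * confVal (x q.2)))) := hKL2
    _ = lam * (1/2) * ∑ q ∈ S, (∑ x : Fin p → Bool,
        isingP lam G x * (1 - confVal (x q.1) * confVal (x q.2))) := hswap
    _ ≤ 12 * lam * (m:ℝ)^4 * Real.exp (-(lam * ((m:ℝ) - 1)) / 2) := hfinal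


end
end

section
/- Let m ≥ 2, let A and B be disjoint sets of m vertices each in {1,…,p} (p ≥ 2m), and let G be the building-block graph whose edges are: all pairs within A, all pairs within B, and a fixed perfect matching of m edges between A and B, with no other edges. For σ ∈ {+1,−1}, let A_{1,σ} be the event that all vertices of A take value σ, and A_{2,σ} the event that all vertices of B take value σ. Then under the Ising distribution P_G, P_G[A_{1,+} ∩ A_{2,+}] / P_G[A_{1,+} ∩ A_{2,−}] = e^{2mλ}. -/
open Real Finset
open scoped Classical

noncomputable section

/-- Flip the spins on the image of `b`. -/
def flipB {p m : ℕ} (b : Fin m → Fin p) (x : Fin p → Bool) : Fin p → Bool :=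
  fun v => if ∃ k, v = b k then !x v else x v

lemma flipB_b {p m : ℕ} (b : Fin m → Fin p) (x : Fin p → Bool) (k : Fin m) :
    flipB b x (b k) = !x (b k) := by
  have h : ∃ k', b k = b k' := ⟨k, rfl⟩
  simp [flipB, h]

lemma flipB_not_b {p m : ℕ} {b : Fin m → Fin p} (x : Fin p → Bool) {v : Fin p}
    (h : ¬ ∃ k, v = b k) : flipB b x v = x v := by
  simp [flipB, h]

lemma flipB_invol {p m : ℕ} (b : Fin m → Fin p) :
    Function.Involutive (flipB b) := by
  intro x
  funext v
  by_cases h : ∃ k, v = b k <;> simp [flipB, h]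

lemma confVal_not (c : Bool) : confVal (!c) = -confVal c := by
  cases c <;> simp [confVal]

lemma sum_pair_ind {p : ℕ} (u v : Fin p) :
    (∑ i : Fin p, ∑ j : Fin p, (if i = u ∧ j = v then (2:ℝ) else 0)) = 2 := by
  simp [ite_and, Finset.sum_ite_eq]

lemma triple_sum_ind {p m : ℕ} (u v : Fin m → Fin p) :
    (∑ i : Fin p, ∑ j : Fin p, ∑ k : Fin m,
      (if i = u k ∧ j = v k then (2:ℝ) else 0)) = 2 * m := by
  rw [Finset.sum_congr rfl fun i _ => Finset.sum_comm, Finset.sum_comm,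
    Finset.sum_congr rfl fun k _ => sum_pair_ind (u k) (v k)]
  simp [mul_comm]

lemma isingZ_pos {p : ℕ} (lam : ℝ) (G : SimpleGraph (Fin p)) : 0 < isingZ lam G := by
  apply Finset.sum_pos (fun x _ => Real.exp_pos _)
  exact Finset.univ_nonempty

lemma isingP_pos {p : ℕ} (lam : ℝ) (G : SimpleGraph (Fin p)) (x : Fin p → Bool) :
    0 < isingP lam G x :=
  div_pos (Real.exp_pos _) (isingZ_pos lam G)

section Main

variable {p m : ℕ} (a b : Fin m → Fin p)

lemma energy_flip (ha : Function.Injective a) (hb : Function.Injective b)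
    (hab : ∀ k k', a k ≠ b k')
    (G : SimpleGraph (Fin p))
    (hG : ∀ u w, G.Adj u w ↔
      (u ≠ w ∧ ((∃ k k', u = a k ∧ w = a k') ∨ (∃ k k', u = b k ∧ w = b k'))) ∨
      (∃ k, (u = a k ∧ w = b k) ∨ (u = b k ∧ w = a k)))
    (x : Fin p → Bool) (hxa : ∀ k, x (a k) = true) (hxb : ∀ k, x (b k) = true) :
    isingEnergy G x = isingEnergy G (flipB b x) + 2 * m := by
  set y := flipB b x with hy
  have hya : ∀ k, y (a k) = x (a k) := by
    intro k
    apply flipB_not_b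
    rintro ⟨k', hk'⟩
    exact hab k k' hk'
  have hyb : ∀ k, y (b k) = !x (b k) := fun k => flipB_b b x k
  have key : ∀ i j : Fin p,
      (if G.Adj i j then confVal (x i) * confVal (x j) else 0)
      = (if G.Adj i j then confVal (y i) * confVal (y j) else 0)
        + ∑ k : Fin m, ((if i = a k ∧ j = b k then (2:ℝ) else 0)
            + (if i = b k ∧ j = a k then 2 else 0)) := by
    intro i j
    by_cases hadj : G.Adj i j
    · simp only [if_pos hadj]
      rcases (hG i j).1 hadj with ⟨hne, hc⟩ | ⟨k, hk⟩
      · rcases hc with ⟨k, k', hik, hjk⟩ | ⟨k, k', hik, hjk⟩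
        · -- both in A
          have hz : ∀ kk : Fin m,
              ((if i = a kk ∧ j = b kk then (2:ℝ) else 0)
                + (if i = b kk ∧ j = a kk then 2 else 0)) = 0 := by
            intro kk
            rw [if_neg, if_neg]
            · ring
            · rintro ⟨h1, _⟩; exact hab k kk (hik.symm.trans h1)
            · rintro ⟨_, h2⟩; exact hab k' kk (hjk.symm.trans h2)
          rw [Finset.sum_eq_zero (fun kk _ => hz kk), hik, hjk, hya, hya]
          ring
        · -- both in B
          have hz : ∀ kk : Fin m,
              ((if i = a kk ∧ j = b kk then (2:ℝ) else 0)
                + (if i = b kk ∧ j = a kk then 2 else 0)) = 0 := by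
            intro kk
            rw [if_neg, if_neg]
            · ring
            · rintro ⟨_, h2⟩; exact hab kk k' (h2.symm.trans hjk)
            · rintro ⟨h1, _⟩; exact hab kk k (h1.symm.trans hik)
          rw [Finset.sum_eq_zero (fun kk _ => hz kk), hik, hjk, hyb, hyb,
            confVal_not, confVal_not]
          ring
      · rcases hk with ⟨hik, hjk⟩ | ⟨hik, hjk⟩
        · -- i = a k, j = b k
          have hsum : (∑ kk : Fin m, ((if i = a kk ∧ j = b kk then (2:ℝ) else 0)
              + (if i = b kk ∧ j = a kk then 2 else 0))) = 2 := by
            rw [Finset.sum_eq_single k]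
            · rw [if_pos ⟨hik, hjk⟩, if_neg]
              · ring
              · rintro ⟨h1, _⟩; exact hab k k (hik.symm.trans h1)
            · intro kk _ hkk
              rw [if_neg, if_neg]
              · ring
              · rintro ⟨h1, _⟩; exact hab k kk (hik.symm.trans h1)
              · rintro ⟨h1, _⟩; exact hkk (ha (hik.symm.trans h1)).symm
            · intro h; exact absurd (Finset.mem_univ k) h
          rw [hsum, hik, hjk, hya, hyb, confVal_not, hxa, hxb]
          simp [confVal]
          norm_num
        · -- i = b k, j = a k
          have hsum : (∑ kk : Fin m, ((if i = a kk ∧ j = b kk then (2:ℝ) else 0)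
              + (if i = b kk ∧ j = a kk then 2 else 0))) = 2 := by
            rw [Finset.sum_eq_single k]
            · rw [if_neg, if_pos ⟨hik, hjk⟩]
              · ring
              · rintro ⟨h1, _⟩; exact hab k k (h1.symm.trans hik)
            · intro kk _ hkk
              rw [if_neg, if_neg]
              · ring
              · rintro ⟨h1, _⟩; exact hkk (hb (hik.symm.trans h1)).symm
              · rintro ⟨h1, _⟩; exact hab kk k (h1.symm.trans hik)
            · intro h; exact absurd (Finset.mem_univ k) h
          rw [hsum, hik, hjk, hya, hyb, confVal_not, hxa, hxb]
          simp [confVal]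
          norm_num
    · simp only [if_neg hadj]
      have hz : ∀ kk : Fin m,
          ((if i = a kk ∧ j = b kk then (2:ℝ) else 0)
            + (if i = b kk ∧ j = a kk then 2 else 0)) = 0 := by
        intro kk
        rw [if_neg, if_neg]
        · ring
        · rintro ⟨h1, h2⟩; exact hadj ((hG i j).2 (Or.inr ⟨kk, Or.inr ⟨h1, h2⟩⟩))
        · rintro ⟨h1, h2⟩; exact hadj ((hG i j).2 (Or.inr ⟨kk, Or.inl ⟨h1, h2⟩⟩))
      rw [Finset.sum_eq_zero (fun kk _ => hz kk)]
      ring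
  unfold isingEnergy
  rw [Finset.sum_congr rfl (fun i _ => Finset.sum_congr rfl (fun j _ => key i j))]
  simp only [Finset.sum_add_distrib]
  rw [triple_sum_ind a b, triple_sum_ind b a]
  ring

theorem building_block_event_ratio' (lam : ℝ) (hlam : 0 < lam)
    (hm : 2 ≤ m) (hp : 2 * m ≤ p)
    (ha : Function.Injective a) (hb : Function.Injective b)
    (hab : ∀ k k', a k ≠ b k')
    (G : SimpleGraph (Fin p))
    (hG : ∀ u w, G.Adj u w ↔
      (u ≠ w ∧ ((∃ k k', u = a k ∧ w = a k') ∨ (∃ k k', u = b k ∧ w = b k'))) ∨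
      (∃ k, (u = a k ∧ w = b k) ∨ (u = b k ∧ w = a k))) :
    eventProb lam G {x | (∀ k, x (a k) = true) ∧ (∀ k, x (b k) = true)} /
      eventProb lam G {x | (∀ k, x (a k) = true) ∧ (∀ k, x (b k) = false)} =
      Real.exp (2 * m * lam) := by
  have hflip : Function.Involutive (flipB b) := flipB_invol b
  have hya : ∀ (x : Fin p → Bool) (k : Fin m), flipB b x (a k) = x (a k) := by
    intro x k
    apply flipB_not_b
    rintro ⟨k', hk'⟩
    exact hab k k' hk'
  have hmem : ∀ x : Fin p → Bool,
      (flipB b x ∈ {x : Fin p → Bool | (∀ k, x (a k) = true) ∧ (∀ k, x (b k) = true)}) ↔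
      ((∀ k, x (a k) = true) ∧ (∀ k, x (b k) = false)) := by
    intro x
    simp only [Set.mem_setOf_eq, hya, flipB_b]
    constructor
    · rintro ⟨h1, h2⟩
      refine ⟨h1, fun k => ?_⟩
      have := h2 k
      cases hxk : x (b k) <;> simp_all
    · rintro ⟨h1, h2⟩
      exact ⟨h1, fun k => by rw [h2 k]; rfl⟩
  have hen : ∀ x : Fin p → Bool, (∀ k, x (a k) = true) → (∀ k, x (b k) = false) →
      isingEnergy G (flipB b x) = isingEnergy G x + 2 * m := by
    intro x h1 h2
    have h1' : ∀ k, (flipB b x) (a k) = true := fun k => (hya x k).trans (h1 k)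
    have h2' : ∀ k, (flipB b x) (b k) = true := fun k => by rw [flipB_b, h2 k]; rfl
    have h := energy_flip a b ha hb hab G hG (flipB b x) h1' h2'
    rwa [hflip x] at h
  have key : eventProb lam G {x | (∀ k, x (a k) = true) ∧ (∀ k, x (b k) = true)}
      = Real.exp (2 * m * lam) *
        eventProb lam G {x | (∀ k, x (a k) = true) ∧ (∀ k, x (b k) = false)} := by
    unfold eventProb
    rw [Finset.mul_sum]
    rw [← Fintype.sum_bijective (flipB b) hflip.bijective
      (fun x => if flipB b x ∈ {x : Fin p → Bool |
          (∀ k, x (a k) = true) ∧ (∀ k, x (b k) = true)}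
        then isingP lam G (flipB b x) else 0) _ (fun x => by beta_reduce; congr)]
    refine Finset.sum_congr rfl fun x _ => ?_
    by_cases hx : x ∈ {x : Fin p → Bool | (∀ k, x (a k) = true) ∧ (∀ k, x (b k) = false)}
    · rw [if_pos ((hmem x).2 hx), if_pos hx]
      unfold isingP
      rw [hen x hx.1 hx.2]
      have h : lam * (isingEnergy G x + 2 * m) = 2 * m * lam + lam * isingEnergy G x := by
        ring
      rw [h, Real.exp_add, mul_div_assoc]
    · rw [if_neg, if_neg hx, mul_zero]
      intro hmem1
      exact hx ((hmem x).1 hmem1)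
  have hpos : 0 < eventProb lam G
      {x : Fin p → Bool | (∀ k, x (a k) = true) ∧ (∀ k, x (b k) = false)} := by
    unfold eventProb
    set x0 : Fin p → Bool := fun v => decide (∃ k, v = a k) with hx0def
    have hx0 : x0 ∈ {x : Fin p → Bool | (∀ k, x (a k) = true) ∧ (∀ k, x (b k) = false)} := by
      constructor
      · intro k
        simp only [hx0def]
        exact decide_eq_true ⟨k, rfl⟩
      · intro k
        simp only [hx0def]
        apply decide_eq_false
        rintro ⟨k', hk'⟩
        exact hab k' k hk'.symm
    refine Finset.sum_pos' (fun x _ => ?_) ⟨x0, Finset.mem_univ x0, ?_⟩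
    · split
      · exact (isingP_pos lam G x).le
      · exact le_refl 0
    · rw [if_pos hx0]
      exact isingP_pos lam G x0
  rw [key, mul_div_assoc, div_self hpos.ne', mul_one]

end Main

/-- For the building block of Ensemble 3, the ratio of the
probability that both cliques are all `+1` to the probability that the first is
all `+1` and the second all `-1` equals `e^{2mλ}`. -/
theorem building_block_event_ratio {p m : ℕ} (lam : ℝ) (hlam : 0 < lam)
    (hm : 2 ≤ m) (hp : 2 * m ≤ p)
    (a b : Fin m → Fin p)
    (ha : Function.Injective a) (hb : Function.Injective b)
    (hab : ∀ k k', a k ≠ b k')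
    (G : SimpleGraph (Fin p))
    (hG : ∀ u w, G.Adj u w ↔
      (u ≠ w ∧ ((∃ k k', u = a k ∧ w = a k') ∨ (∃ k k', u = b k ∧ w = b k'))) ∨
      (∃ k, (u = a k ∧ w = b k) ∨ (u = b k ∧ w = a k))) :
    eventProb lam G {x | (∀ k, x (a k) = true) ∧ (∀ k, x (b k) = true)} /
      eventProb lam G {x | (∀ k, x (a k) = true) ∧ (∀ k, x (b k) = false)} =
      Real.exp (2 * m * lam) := by
  exact building_block_event_ratio' a b lam hlam hm hp ha hb hab G hG

end
end
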